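/- Let P and Q be probability mass functions on a finite set 𝒳 with Supp(P) ⊆ Supp(Q), and for each n let P^{×n} and Q^{×n} denote the n-fold product (i.i.d.) distributions on 𝒳^n. Then lim_{ε→0} limsup_{n→∞} (1/n) D^ε_∞(P^{×n}||Q^{×n}) = D(P||Q), the Kullback–Leibler divergence D(P||Q) = Σ_{x : P(x)>0} P(x) log(P(x)/Q(x)). -/

import Mathlib

/-!
`D^ε_∞(P‖Q)` is sandwiched by quantiles of the log-likelihood ratio `log₂ (P/Q)` under `P`: it
is at most `log₂ b` once the `P`-mass of `{P > b Q}` is at most `ε`, and at least `log₂ a` once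
the `P`-mass of `{P ≥ 2 a Q}` exceeds `2 ε`. For the product distributions the log-likelihood
ratio is a sum of `n` i.i.d. copies of `log₂ (P/Q)`, with mean `n D(P‖Q)` and variance
`n V(P‖Q)`, so by Chebyshev both quantiles are `n D(P‖Q) + o(n)` for every fixed
`ε ∈ (0, 1/2)`. Hence the limsup is exactly `D(P‖Q)` for all small `ε`.
-/

open scoped Classical BigOperators

/-- `maxRatio P φ Q = max_{x : P(x) > 0} φ(x)/Q(x)`. -/
noncomputable def maxRatio {α : Type*} [Fintype α] (P φ Q : α → ℝ) : ℝ :=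
  sSup ((fun x => φ x / Q x) '' {x | 0 < P x})

/-- The smooth max Rényi divergence
`D^ε_∞(P‖Q) = log₂ inf_{φ ∈ B^ε(P)} max_{x : P(x) > 0} φ(x)/Q(x)`. -/
noncomputable def Dsm {α : Type*} [Fintype α] (ε : ℝ) (P Q : α → ℝ) : ℝ :=
  Real.logb 2 (sInf {r : ℝ | ∃ φ : α → ℝ,
    (∀ x, 0 ≤ φ x ∧ φ x ≤ P x) ∧ 1 - ε ≤ ∑ x, φ x ∧ r = maxRatio P φ Q})

open Finset Real Filter Topology

def smoothRatios {α : Type*} [Fintype α] (ε : ℝ) (P Q : α → ℝ) : Set ℝ :=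
  {r : ℝ | ∃ φ : α → ℝ, (∀ x, 0 ≤ φ x ∧ φ x ≤ P x) ∧ 1 - ε ≤ ∑ x, φ x ∧ r = maxRatio P φ Q}

lemma Dsm_eq_logb_sInf {α : Type*} [Fintype α] (ε : ℝ) (P Q : α → ℝ) :
    Dsm ε P Q = logb 2 (sInf (smoothRatios ε P Q)) := rfl

section OneShot

variable {α : Type*} [Fintype α] {P Q φ : α → ℝ}

lemma exists_pos_of_sum_eq_one (hP1 : ∑ x, P x = 1) : ∃ x, 0 < P x := by
  obtain ⟨x, -, hx⟩ := exists_lt_of_sum_lt (s := univ) (f := 0) (g := P) (by simp [hP1])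
  exact ⟨x, hx⟩

lemma le_maxRatio_mul (hsupp : ∀ x, 0 < P x → 0 < Q x) {x : α} (hx : 0 < P x) :
    φ x ≤ maxRatio P φ Q * Q x :=
  (div_le_iff₀ (hsupp x hx)).1 <| le_csSup (Set.toFinite _).bddAbove ⟨x, hx, rfl⟩

lemma maxRatio_le (hP1 : ∑ x, P x = 1) (hsupp : ∀ x, 0 < P x → 0 < Q x) {c : ℝ}
    (h : ∀ x, 0 < P x → φ x ≤ c * Q x) : maxRatio P φ Q ≤ c := by
  obtain ⟨x₀, hx₀⟩ := exists_pos_of_sum_eq_one hP1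
  refine csSup_le ⟨_, x₀, hx₀, rfl⟩ ?_
  rintro _ ⟨x, hx, rfl⟩
  exact (div_le_iff₀ (hsupp x hx)).2 (h x hx)

/-- Below `a`, a smoothing `φ` would have to remove half of the `P`-mass of `s`, which is more
than `ε`. -/
lemma le_of_mem_smoothRatios (hP1 : ∑ x, P x = 1) (hQ0 : ∀ x, 0 ≤ Q x)
    (hsupp : ∀ x, 0 < P x → 0 < Q x) {ε a : ℝ} {s : Finset α}
    (hs : ∀ x ∈ s, 0 < P x → 2 * a * Q x ≤ P x) (hmass : 2 * ε < ∑ x ∈ s, P x)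
    {r : ℝ} (hr : r ∈ smoothRatios ε P Q) : a ≤ r := by
  obtain ⟨φ, hφ, hsum, rfl⟩ := hr
  by_contra! hlt
  have half : ∀ x ∈ s, P x / 2 ≤ P x - φ x := by
    intro x hx
    rcases (hφ x).1.trans (hφ x).2 |>.lt_or_eq with hpos | _
    · have := le_maxRatio_mul hsupp (φ := φ) hpos
      nlinarith [hs x hx hpos, mul_le_mul_of_nonneg_right hlt.le (hQ0 x)]
    · linarith [(hφ x).2, (hφ x).1]
  have : ∑ x ∈ s, P x / 2 ≤ ε := calc
    ∑ x ∈ s, P x / 2 ≤ ∑ x ∈ s, (P x - φ x) := sum_le_sum half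
    _ ≤ ∑ x, (P x - φ x) :=
      sum_le_sum_of_subset_of_nonneg (subset_univ s) fun x _ _ => sub_nonneg.2 (hφ x).2
    _ ≤ ε := by rw [sum_sub_distrib, hP1]; linarith
  rw [← sum_div] at this
  linarith

/-- Clipping `P` at `b Q` removes only the `P`-mass where `P > b Q`. -/
lemma exists_mem_smoothRatios_le (hP0 : ∀ x, 0 ≤ P x) (hP1 : ∑ x, P x = 1)
    (hQ0 : ∀ x, 0 ≤ Q x) (hsupp : ∀ x, 0 < P x → 0 < Q x) {ε b : ℝ} (hb : 0 ≤ b)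
    {t : Finset α} (ht : ∀ x, b * Q x < P x → x ∈ t) (hmass : ∑ x ∈ t, P x ≤ ε) :
    ∃ r ∈ smoothRatios ε P Q, r ≤ b := by
  set φ := fun x => min (P x) (b * Q x)
  have hφ : ∀ x, 0 ≤ φ x ∧ φ x ≤ P x :=
    fun x => ⟨le_min (hP0 x) (mul_nonneg hb (hQ0 x)), min_le_left _ _⟩
  have hclip : ∑ x, (P x - φ x) ≤ ε := calc
    ∑ x, (P x - φ x) = ∑ x ∈ t, (P x - φ x) := by
      refine (sum_subset (subset_univ t) fun x _ hx => ?_).symm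
      have : P x ≤ b * Q x := not_lt.1 (mt (ht x) hx)
      simp [φ, min_eq_left this]
    _ ≤ ∑ x ∈ t, P x := sum_le_sum fun x _ => by linarith [(hφ x).1]
    _ ≤ ε := hmass
  refine ⟨_, ⟨φ, hφ, ?_, rfl⟩, maxRatio_le hP1 hsupp fun x _ => min_le_right _ _⟩
  rw [sum_sub_distrib, hP1] at hclip
  linarith

theorem Dsm_mem_Icc_logb (hP0 : ∀ x, 0 ≤ P x) (hP1 : ∑ x, P x = 1) (hQ0 : ∀ x, 0 ≤ Q x)
    (hsupp : ∀ x, 0 < P x → 0 < Q x) {ε a b : ℝ} (ha : 0 < a) (hab : a ≤ b) {s t : Finset α}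
    (hs : ∀ x ∈ s, 0 < P x → 2 * a * Q x ≤ P x) (hsmass : 2 * ε < ∑ x ∈ s, P x)
    (ht : ∀ x, b * Q x < P x → x ∈ t) (htmass : ∑ x ∈ t, P x ≤ ε) :
    Dsm ε P Q ∈ Set.Icc (logb 2 a) (logb 2 b) := by
  have hlow : ∀ r ∈ smoothRatios ε P Q, a ≤ r :=
    fun r => le_of_mem_smoothRatios hP1 hQ0 hsupp hs hsmass
  obtain ⟨r, hr, hrb⟩ := exists_mem_smoothRatios_le hP0 hP1 hQ0 hsupp (ha.le.trans hab) ht htmass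
  have hinf : a ≤ sInf (smoothRatios ε P Q) := le_csInf ⟨r, hr⟩ hlow
  rw [Dsm_eq_logb_sInf]
  exact ⟨logb_le_logb_of_le one_lt_two ha hinf,
    logb_le_logb_of_le one_lt_two (ha.trans_le hinf) ((csInf_le ⟨a, hlow⟩ hr).trans hrb)⟩

end OneShot

section Product

variable {α : Type*} [Fintype α] {P : α → ℝ}

lemma sum_fin_succ_pi {n : ℕ} (F : (Fin (n + 1) → α) → ℝ) :
    ∑ x, F x = ∑ a, ∑ y : Fin n → α, F (Fin.cons a y) := by
  rw [← (Fin.consEquiv fun _ => α).sum_comp, Fintype.sum_prod_type]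
  rfl

lemma sum_prod_eq_one (hP1 : ∑ a, P a = 1) (n : ℕ) : ∑ x : Fin n → α, ∏ i, P (x i) = 1 := by
  rw [← Fintype.sum_pow, hP1, one_pow]

-- The cross terms vanish because `g` is centred under `P`.
lemma sum_prod_mul_sum_sq (hP1 : ∑ a, P a = 1) {g : α → ℝ} (hg : ∑ a, P a * g a = 0)
    (n : ℕ) : ∑ x : Fin n → α, (∏ i, P (x i)) * (∑ i, g (x i)) ^ 2 = n * ∑ a, P a * g a ^ 2 := by
  induction n with
  | zero => simp
  | succ n ih =>
    set w : (Fin n → α) → ℝ := fun y => ∏ i, P (y i)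
    set S : (Fin n → α) → ℝ := fun y => ∑ i, g (y i)
    calc ∑ x : Fin (n + 1) → α, (∏ i, P (x i)) * (∑ i, g (x i)) ^ 2
        = ∑ a, ∑ y, (P a * g a ^ 2 * w y + 2 * (P a * g a) * (w y * S y)
            + P a * (w y * S y ^ 2)) := by
          rw [sum_fin_succ_pi]
          simp only [Fin.prod_univ_succ, Fin.sum_univ_succ, Fin.cons_zero, Fin.cons_succ, w, S]
          exact sum_congr rfl fun a _ => sum_congr rfl fun y _ => by ring
      _ = (∑ a, P a * g a ^ 2) * ∑ y, w y + 2 * (∑ a, P a * g a) * ∑ y, w y * S y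
            + (∑ a, P a) * ∑ y, w y * S y ^ 2 := by
          simp only [sum_add_distrib, ← mul_sum, ← sum_mul]
      _ = (n + 1 : ℕ) * ∑ a, P a * g a ^ 2 := by
          rw [sum_prod_eq_one hP1, hg, hP1, ih]
          push_cast
          ring

lemma sum_prod_filter_le (hP0 : ∀ a, 0 ≤ P a) (hP1 : ∑ a, P a = 1) {g : α → ℝ}
    (hg : ∑ a, P a * g a = 0) (n : ℕ) {t : ℝ} (ht : 0 < t) :
    ∑ x ∈ univ.filter (fun x : Fin n → α => t ≤ |∑ i, g (x i)|), ∏ i, P (x i)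
      ≤ n * (∑ a, P a * g a ^ 2) / t ^ 2 := by
  rw [le_div_iff₀ (by positivity), sum_mul, ← sum_prod_mul_sum_sq hP1 hg n]
  have hw : ∀ x : Fin n → α, 0 ≤ ∏ i, P (x i) := fun x => prod_nonneg fun i _ => hP0 _
  calc ∑ x ∈ univ.filter (fun x : Fin n → α => t ≤ |∑ i, g (x i)|), (∏ i, P (x i)) * t ^ 2
      ≤ ∑ x ∈ univ.filter (fun x : Fin n → α => t ≤ |∑ i, g (x i)|),
          (∏ i, P (x i)) * (∑ i, g (x i)) ^ 2 := by
        refine sum_le_sum fun x hx => mul_le_mul_of_nonneg_left ?_ (hw x)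
        rw [← sq_abs (∑ i, g (x i))]
        exact pow_le_pow_left₀ ht.le (mem_filter.1 hx).2 2
    _ ≤ _ := sum_le_sum_of_subset_of_nonneg (filter_subset _ _)
        fun x _ _ => mul_nonneg (hw x) (sq_nonneg _)

end Product

section IID

variable {α : Type*} (P Q : α → ℝ)

noncomputable def llr (a : α) : ℝ := logb 2 (P a / Q a)

variable {P Q} in
lemma prod_eq_prod_mul_rpow_sum_llr (hP0 : ∀ a, 0 ≤ P a) (hsupp : ∀ a, 0 < P a → 0 < Q a)
    {n : ℕ} {x : Fin n → α} (hx : 0 < ∏ i, P (x i)) :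
    ∏ i, P (x i) = (∏ i, Q (x i)) * 2 ^ ∑ i, llr P Q (x i) := by
  have hpos : ∀ i, 0 < P (x i) :=
    fun i => (hP0 _).lt_of_ne' (prod_ne_zero_iff.1 hx.ne' i (mem_univ i))
  rw [rpow_sum_of_pos two_pos, ← prod_mul_distrib]
  refine prod_congr rfl fun i _ => ?_
  rw [llr, rpow_logb two_pos (by norm_num) (div_pos (hpos i) (hsupp _ (hpos i))),
    mul_div_cancel₀ _ (hsupp _ (hpos i)).ne']

variable [Fintype α]

-- Terms with `P a = 0` vanish whatever junk value `llr` takes there.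
noncomputable def relEntropy : ℝ := ∑ a, P a * llr P Q a

noncomputable def relEntropyVariance : ℝ := ∑ a, P a * (llr P Q a - relEntropy P Q) ^ 2

variable {P Q}

lemma sum_mul_llr_sub_relEntropy (hP1 : ∑ a, P a = 1) :
    ∑ a, P a * (llr P Q a - relEntropy P Q) = 0 := by
  simp only [mul_sub, sum_sub_distrib, ← sum_mul, hP1, relEntropy, one_mul, sub_self]

lemma sum_llr_sub_relEntropy {n : ℕ} (x : Fin n → α) :
    ∑ i, (llr P Q (x i) - relEntropy P Q) = ∑ i, llr P Q (x i) - n * relEntropy P Q := by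
  simp [sum_sub_distrib]

/-- Chebyshev's inequality keeps the log-likelihood ratio of the product distributions within
`n δ / 2` of `n D(P‖Q)` with probability `> 2 ε`, and above `n (D(P‖Q) + δ)` with probability
`≤ ε`. -/
theorem Dsm_pi_mem_Icc (hP0 : ∀ a, 0 ≤ P a) (hP1 : ∑ a, P a = 1) (hQ0 : ∀ a, 0 ≤ Q a)
    (hsupp : ∀ a, 0 < P a → 0 < Q a) {ε δ : ℝ} (hδ : 0 < δ) {n : ℕ} (hnδ : 2 ≤ n * δ)
    (hup : relEntropyVariance P Q ≤ ε * (n * δ ^ 2))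
    (hlow : 4 * relEntropyVariance P Q < (1 - 2 * ε) * (n * δ ^ 2)) :
    Dsm ε (fun x : Fin n → α => ∏ i, P (x i)) (fun x => ∏ i, Q (x i)) ∈
      Set.Icc (n * (relEntropy P Q - δ)) (n * (relEntropy P Q + δ)) := by
  set D := relEntropy P Q
  set V := relEntropyVariance P Q
  set S : (Fin n → α) → ℝ := fun x => ∑ i, (llr P Q (x i) - D)
  have hn : (0 : ℝ) < n := by by_contra! h; nlinarith
  have hS : ∀ x, S x = ∑ i, llr P Q (x i) - n * D := fun x => sum_llr_sub_relEntropy x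
  have hcheb : ∀ t, 0 < t → ∑ x ∈ univ.filter (fun x => t ≤ |S x|), ∏ i, P (x i) ≤ n * V / t ^ 2 :=
    fun t ht => sum_prod_filter_le hP0 hP1 (sum_mul_llr_sub_relEntropy hP1) n ht
  have hP0' : ∀ x : Fin n → α, 0 ≤ ∏ i, P (x i) := fun x => prod_nonneg fun i _ => hP0 _
  have hQ0' : ∀ x : Fin n → α, 0 ≤ ∏ i, Q (x i) := fun x => prod_nonneg fun i _ => hQ0 _
  have hsupp' : ∀ x : Fin n → α, 0 < ∏ i, P (x i) → 0 < ∏ i, Q (x i) := fun x hx =>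
    prod_pos fun i _ => hsupp _ <| (hP0 _).lt_of_ne' (prod_ne_zero_iff.1 hx.ne' i (mem_univ i))
  rw [← logb_rpow (b := 2) (x := n * (D - δ)) two_pos (by norm_num),
    ← logb_rpow (b := 2) (x := n * (D + δ)) two_pos (by norm_num)]
  refine Dsm_mem_Icc_logb hP0' (sum_prod_eq_one hP1 n) hQ0' hsupp' (rpow_pos_of_pos two_pos _)
    (rpow_le_rpow_of_exponent_le one_le_two (by nlinarith))
    (s := univ.filter fun x => |S x| < n * δ / 2) (t := univ.filter fun x => n * δ ≤ |S x|)
    ?_ ?_ ?_ ?_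
  · intro x hx hpos
    have hSx : n * (D - δ) + 1 ≤ ∑ i, llr P Q (x i) := by
      linarith [(abs_lt.1 (mem_filter.1 hx).2).1, hS x]
    rw [prod_eq_prod_mul_rpow_sum_llr hP0 hsupp hpos, mul_comm _ (∏ i, Q (x i))]
    refine mul_le_mul_of_nonneg_left ?_ (hQ0' x)
    calc 2 * (2 : ℝ) ^ (n * (D - δ)) = 2 ^ (n * (D - δ) + 1) := by
          rw [rpow_add_one two_ne_zero, mul_comm]
      _ ≤ _ := rpow_le_rpow_of_exponent_le one_le_two hSx
  · have hsplit := sum_filter_add_sum_filter_not univ (fun x : Fin n → α => |S x| < n * δ / 2)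
      fun x => ∏ i, P (x i)
    simp only [not_lt] at hsplit
    rw [sum_prod_eq_one hP1] at hsplit
    have hbad : n * V / (n * δ / 2) ^ 2 < 1 - 2 * ε := by
      rw [show n * V / (n * δ / 2) ^ 2 = 4 * V / (n * δ ^ 2) by field_simp; ring,
        div_lt_iff₀ (by positivity)]
      exact hlow
    linarith [hcheb _ (by positivity : 0 < n * δ / 2)]
  · intro x hx
    have hpos : 0 < ∏ i, P (x i) := lt_of_le_of_lt (by have := hQ0' x; positivity) hx
    rw [prod_eq_prod_mul_rpow_sum_llr hP0 hsupp hpos, mul_comm] at hx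
    have hSx := (rpow_lt_rpow_left_iff one_lt_two).1 (lt_of_mul_lt_mul_left hx (hQ0' x))
    exact mem_filter.2 ⟨mem_univ x, le_abs.2 (Or.inl (by linarith [hS x]))⟩
  · refine (hcheb _ (by positivity)).trans ?_
    rw [show n * V / (n * δ) ^ 2 = V / (n * δ ^ 2) by field_simp,
      div_le_iff₀ (by positivity)]
    exact hup

end IID

theorem tendsto_Dsm_pi_div {α : Type*} [Fintype α] {P Q : α → ℝ} (hP0 : ∀ a, 0 ≤ P a)
    (hP1 : ∑ a, P a = 1) (hQ0 : ∀ a, 0 ≤ Q a) (hsupp : ∀ a, 0 < P a → 0 < Q a) {ε : ℝ}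
    (hε0 : 0 < ε) (hε : ε < 1 / 2) :
    Tendsto (fun n : ℕ => Dsm ε (fun x : Fin n → α => ∏ i, P (x i)) (fun x => ∏ i, Q (x i)) / n)
      atTop (𝓝 (relEntropy P Q)) := by
  refine Metric.tendsto_nhds.2 fun e he => ?_
  have hδ : 0 < e / 2 := half_pos he
  have hn : Tendsto (fun n : ℕ => (n : ℝ) * (e / 2) ^ 2) atTop atTop :=
    tendsto_natCast_atTop_atTop.atTop_mul_const (pow_pos hδ 2)
  filter_upwards [(tendsto_natCast_atTop_atTop.atTop_mul_const hδ).eventually_ge_atTop 2,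
    (hn.const_mul_atTop hε0).eventually_ge_atTop (relEntropyVariance P Q),
    (hn.const_mul_atTop (by linarith : 0 < 1 - 2 * ε)).eventually_gt_atTop
      (4 * relEntropyVariance P Q)] with n hnδ hup hlow
  obtain ⟨hlo, hhi⟩ := Dsm_pi_mem_Icc hP0 hP1 hQ0 hsupp hδ hnδ hup hlow
  have hn : (0 : ℝ) < n := by by_contra! h; nlinarith
  rw [Real.dist_eq, abs_lt, lt_sub_iff_add_lt, sub_lt_iff_lt_add, lt_div_iff₀ hn, div_lt_iff₀ hn]
  constructor <;> nlinarith

theorem smooth_max_divergence_rate_iid_eq_KL_general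
    {α : Type*} [Fintype α]
    (P Q : α → ℝ)
    (hP0 : ∀ x, 0 ≤ P x) (hP1 : ∑ x, P x = 1)
    (hQ0 : ∀ x, 0 ≤ Q x)
    (hsupp : ∀ x, 0 < P x → 0 < Q x) :
    Filter.Tendsto
      (fun ε : ℝ =>
        Filter.limsup
          (fun n =>
            Dsm ε (fun x : Fin (n + 1) → α => ∏ i, P (x i))
              (fun x : Fin (n + 1) → α => ∏ i, Q (x i)) / (n + 1))
          Filter.atTop)
      (nhdsWithin 0 (Set.Ioi 0))
      (nhds (∑ x ∈ Finset.univ.filter (fun x => 0 < P x),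
        P x * Real.logb 2 (P x / Q x))) := by
  have hKL : ∑ x ∈ univ.filter (fun x => 0 < P x), P x * logb 2 (P x / Q x) = relEntropy P Q :=
    sum_filter_of_ne fun x _ hx => (hP0 x).lt_of_ne' (left_ne_zero_of_mul hx)
  rw [hKL]
  refine tendsto_const_nhds.congr' <| eventuallyEq_of_mem (Ioo_mem_nhdsGT one_half_pos)
    fun ε hε => (Tendsto.limsup_eq ?_).symm
  simpa [Function.comp_def] using
    (tendsto_Dsm_pi_div hP0 hP1 hQ0 hsupp hε.1 hε.2).comp (tendsto_add_atTop_nat 1)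

/-- for i.i.d. product distributions,
`lim_{ε→0⁺} limsup_n (1/n) D^ε_∞(P^{×n}‖Q^{×n}) = D(P‖Q)`, the Kullback–Leibler
divergence `D(P‖Q) = ∑_{x : P(x)>0} P(x) log₂ (P(x)/Q(x))`. -/
theorem smooth_max_divergence_rate_iid_eq_KL
    {α : Type*} [Fintype α]
    (P Q : α → ℝ)
    (hP0 : ∀ x, 0 ≤ P x) (hP1 : ∑ x, P x = 1)
    (hQ0 : ∀ x, 0 ≤ Q x) (hQ1 : ∑ x, Q x = 1)
    (hsupp : ∀ x, 0 < P x → 0 < Q x) :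
    Filter.Tendsto
      (fun ε : ℝ =>
        Filter.limsup
          (fun n =>
            Dsm ε (fun x : Fin (n + 1) → α => ∏ i, P (x i))
              (fun x : Fin (n + 1) → α => ∏ i, Q (x i)) / (n + 1))
          Filter.atTop)
      (nhdsWithin 0 (Set.Ioi 0))
      (nhds (∑ x ∈ Finset.univ.filter (fun x => 0 < P x),
        P x * Real.logb 2 (P x / Q x))) :=
  smooth_max_divergence_rate_iid_eq_KL_general P Q hP0 hP1 hQ0 hsupp
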